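/- Let ε > 0 and let P ⊂ [0,1)² be an ε-separated set (with respect to dist_H) with #P ≥ C·ε^{-2} for some C > 0, and let μ = (1/#P)·∑_{p∈P} δ_p. Then for every dyadic rectangle R with |R| ≥ ε², the average ⟨μ⟩_R = μ(R)/|R| satisfies ⟨μ⟩_R ≤ 2/C. -/

import Mathlib

open MeasureTheory
open scoped ENNReal

/-- A dyadic interval `[k·2^n, (k+1)·2^n)`. -/
def IsDyadicInterval (I : Set ℝ) : Prop :=
  ∃ k n : ℤ, I = Set.Ico ((k : ℝ) * 2 ^ n) (((k : ℝ) + 1) * 2 ^ n)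

/-- An axis-parallel dyadic rectangle in the plane. -/
def IsDyadicRect (R : Set (ℝ × ℝ)) : Prop :=
  ∃ I J : Set ℝ, IsDyadicInterval I ∧ IsDyadicInterval J ∧ R = I ×ˢ J

/-- `dist_H(p,q) = inf { |R|^{1/2} : R dyadic rectangle containing p and q }`. -/
noncomputable def distH (p q : ℝ × ℝ) : ℝ≥0∞ :=
  sInf {v | ∃ R : Set (ℝ × ℝ), IsDyadicRect R ∧ p ∈ R ∧ q ∈ R ∧ v = volume R ^ (1 / 2 : ℝ)}

def unitSq : Set (ℝ × ℝ) := Set.Ico (0 : ℝ) 1 ×ˢ Set.Ico (0 : ℝ) 1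

/-!
A dyadic rectangle of area `2 ^ m < ε²` contains at most one point of an `ε`-separated set,
because the square root of its area bounds `dist_H` of any two of its points. A dyadic rectangle
`R` with `|R| ≥ ε²` is cut along its first side into `2 ^ u = |R| / 2 ^ m` dyadic slices of
area `2 ^ m`, where `2 ^ m < ε² ≤ 2 ^ (m + 1)`; hence `#(P ∩ R) ≤ 2 ^ u ≤ 2 |R| ε⁻²`, and
dividing by `#P ≥ C ε⁻²` gives the bound on `μ(R) / |R|`.
-/

open Finset

def dyadicIco (k n : ℤ) : Set ℝ := Set.Ico (k * 2 ^ n) ((k + 1) * 2 ^ n)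

lemma volume_dyadicIco (k n : ℤ) : volume (dyadicIco k n) = ENNReal.ofReal (2 ^ n) := by
  rw [dyadicIco, Real.volume_Ico]
  ring_nf

lemma volume_dyadicIco_prod (k n l w : ℤ) :
    volume (dyadicIco k n ×ˢ dyadicIco l w) = ENNReal.ofReal (2 ^ (n + w)) := by
  rw [Measure.volume_eq_prod, Measure.prod_prod, volume_dyadicIco, volume_dyadicIco,
    ← ENNReal.ofReal_mul (by positivity), zpow_add₀ two_ne_zero]

lemma IsDyadicRect.exists_eq_dyadicIco_prod {R : Set (ℝ × ℝ)} (hR : IsDyadicRect R) :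
    ∃ k n l w : ℤ, R = dyadicIco k n ×ˢ dyadicIco l w := by
  obtain ⟨_, _, ⟨k, n, rfl⟩, ⟨l, w, rfl⟩, rfl⟩ := hR
  exact ⟨k, n, l, w, rfl⟩

lemma IsDyadicRect.measurableSet {R : Set (ℝ × ℝ)} (hR : IsDyadicRect R) : MeasurableSet R := by
  obtain ⟨k, n, l, w, rfl⟩ := hR.exists_eq_dyadicIco_prod
  exact measurableSet_Ico.prod measurableSet_Ico

lemma IsDyadicRect.volume_ne_top {R : Set (ℝ × ℝ)} (hR : IsDyadicRect R) : volume R ≠ ⊤ := by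
  obtain ⟨k, n, l, w, rfl⟩ := hR.exists_eq_dyadicIco_prod
  exact (volume_dyadicIco_prod k n l w).trans_ne ENNReal.ofReal_ne_top

lemma mem_dyadicIco_floor (x : ℝ) (n : ℤ) : x ∈ dyadicIco ⌊x / 2 ^ n⌋ n := by
  have h := Int.floor_eq_iff.mp (rfl : ⌊x / 2 ^ n⌋ = _)
  rw [le_div_iff₀ (by positivity), div_lt_iff₀ (by positivity)] at h
  exact h

lemma floor_div_mem_Ico_of_mem_dyadicIco {x : ℝ} {k n : ℤ} (hx : x ∈ dyadicIco k n) (u : ℕ) :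
    ⌊x / 2 ^ (n - u)⌋ ∈ Finset.Ico (k * 2 ^ u) ((k + 1) * 2 ^ u) := by
  have hsplit : (2 : ℝ) ^ n = 2 ^ u * 2 ^ (n - u) := by
    rw [← zpow_natCast, ← zpow_add₀ two_ne_zero]; ring_nf
  obtain ⟨h₁, h₂⟩ := hx
  rw [hsplit, ← mul_assoc] at h₁ h₂
  rw [Finset.mem_Ico, Int.le_floor, Int.floor_lt, le_div_iff₀ (by positivity),
    div_lt_iff₀ (by positivity)]
  push_cast
  exact ⟨h₁, h₂⟩

lemma Set.Pairwise.subsingleton_inter_of_volume_lt {ε : ℝ≥0∞} {P : Set (ℝ × ℝ)}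
    (hP : P.Pairwise fun p q => ε ≤ distH p q) {R : Set (ℝ × ℝ)} (hR : IsDyadicRect R)
    (hvol : volume R < ε ^ 2) : (P ∩ R).Subsingleton := by
  rintro p ⟨hp, hpR⟩ q ⟨hq, hqR⟩
  by_contra hne
  have hdist : distH p q < ε := calc
    distH p q ≤ volume R ^ (1 / 2 : ℝ) := sInf_le ⟨R, hR, hpR, hqR, rfl⟩
    _ < (ε ^ 2) ^ (1 / 2 : ℝ) := ENNReal.rpow_lt_rpow hvol (by norm_num)
    _ = ε := by rw [one_div]; exact_mod_cast ENNReal.pow_rpow_inv_natCast two_ne_zero ε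
  exact (hP hp hq hne).not_gt hdist

lemma card_filter_mem_dyadicIco_prod_le {ε : ℝ≥0∞} {P : Finset (ℝ × ℝ)}
    (hP : (P : Set (ℝ × ℝ)).Pairwise fun p q => ε ≤ distH p q) (k n l w : ℤ) (u : ℕ)
    [DecidablePred (· ∈ dyadicIco k n ×ˢ dyadicIco l w)]
    (hvol : ENNReal.ofReal (2 ^ (n - u + w)) < ε ^ 2) :
    #{p ∈ P | p ∈ dyadicIco k n ×ˢ dyadicIco l w} ≤ 2 ^ u := by
  set s := {p ∈ P | p ∈ dyadicIco k n ×ˢ dyadicIco l w}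
  set f : ℝ × ℝ → ℤ := fun p => ⌊p.1 / 2 ^ (n - u)⌋
  have hmaps : ∀ p ∈ s, f p ∈ Finset.Ico (k * 2 ^ u) ((k + 1) * 2 ^ u) := fun p hp =>
    floor_div_mem_Ico_of_mem_dyadicIco (Finset.mem_filter.mp hp).2.1 u
  have hinj : Set.InjOn f s := by
    intro p hp q hq hpq
    rw [mem_coe, mem_filter] at hp hq
    have hsub := hP.subsingleton_inter_of_volume_lt
      ⟨_, _, ⟨f p, n - u, rfl⟩, ⟨l, w, rfl⟩, rfl⟩
      ((volume_dyadicIco_prod _ _ _ _).trans_lt hvol)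
    exact hsub ⟨hp.1, mem_dyadicIco_floor p.1 _, hp.2.2⟩
      ⟨hq.1, hpq ▸ mem_dyadicIco_floor q.1 _, hq.2.2⟩
  calc #s ≤ #(Finset.Ico (k * 2 ^ u) ((k + 1) * 2 ^ u)) := card_le_card_of_injOn f hmaps hinj
    _ = 2 ^ u := by
      rw [Int.card_Ico, show (k + 1) * 2 ^ u - k * 2 ^ u = ((2 ^ u : ℕ) : ℤ) by push_cast; ring,
        Int.toNat_natCast]

lemma card_filter_mem_mul_sq_le {ε : ℝ} (hε : 0 < ε) {P : Finset (ℝ × ℝ)}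
    (hP : (P : Set (ℝ × ℝ)).Pairwise fun p q => ENNReal.ofReal ε ≤ distH p q)
    {R : Set (ℝ × ℝ)} [DecidablePred (· ∈ R)] (hR : IsDyadicRect R)
    (hvol : ENNReal.ofReal (ε ^ 2) ≤ volume R) :
    (#{p ∈ P | p ∈ R} : ℝ) * ε ^ 2 ≤ 2 * (volume R).toReal := by
  obtain ⟨k, n, l, w, rfl⟩ := hR.exists_eq_dyadicIco_prod
  rw [volume_dyadicIco_prod, ENNReal.ofReal_le_ofReal_iff (by positivity)] at hvol
  rw [volume_dyadicIco_prod, ENNReal.toReal_ofReal (by positivity)]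
  -- cut the rectangle into `2 ^ u` dyadic slices of area `2 ^ m < ε ^ 2 ≤ 2 ^ (m + 1)`
  obtain ⟨m, hm₁, hm₂⟩ := exists_mem_Ioc_zpow (by positivity : 0 < ε ^ 2) one_lt_two
  have hmnw : m < n + w := (zpow_lt_zpow_iff_right₀ one_lt_two).mp (hm₁.trans_le hvol)
  obtain ⟨u, hu⟩ : ∃ u : ℕ, (u : ℤ) = n + w - m := ⟨_, Int.toNat_of_nonneg (by omega)⟩
  have hcard := card_filter_mem_dyadicIco_prod_le hP k n l w u (by
    rw [show n - u + w = m by omega, ← ENNReal.ofReal_pow hε.le]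
    exact (ENNReal.ofReal_lt_ofReal_iff (by positivity)).mpr hm₁)
  calc (#{p ∈ P | p ∈ dyadicIco k n ×ˢ dyadicIco l w} : ℝ) * ε ^ 2
      ≤ 2 ^ u * 2 ^ (m + 1) := by gcongr; exact_mod_cast hcard
    _ = 2 * 2 ^ (n + w) := by
      rw [← zpow_natCast, ← zpow_add₀ two_ne_zero, hu,
        show n + w - m + (m + 1) = n + w + 1 by ring, zpow_add_one₀ two_ne_zero, mul_comm]

lemma inv_card_smul_sum_dirac_apply {α : Type*} [MeasurableSpace α] (P : Finset α) {s : Set α}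
    [DecidablePred (· ∈ s)] (hs : MeasurableSet s) :
    ((#P : ℝ≥0∞)⁻¹ • ∑ p ∈ P, Measure.dirac p) s = #{p ∈ P | p ∈ s} / #P := by
  rw [Measure.smul_apply, Measure.finsetSum_apply, smul_eq_mul, ENNReal.div_eq_inv_mul]
  simp only [Measure.dirac_apply' _ hs, Set.indicator_apply, Pi.one_apply, Finset.sum_boole]

theorem stmt6_general (ε C : ℝ) (hε : 0 < ε) (hC : 0 < C)
    (P : Finset (ℝ × ℝ))
    (hsep : ∀ p ∈ P, ∀ q ∈ P, p ≠ q → ENNReal.ofReal ε ≤ distH p q)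
    (hcard : C * ε⁻¹ ^ 2 ≤ (P.card : ℝ)) :
    ∀ R : Set (ℝ × ℝ), IsDyadicRect R → ENNReal.ofReal (ε ^ 2) ≤ volume R →
      (((P.card : ℝ≥0∞))⁻¹ • ∑ p ∈ P, Measure.dirac p) R / volume R ≤
        ENNReal.ofReal (2 / C) := by
  classical
  intro R hR hvol
  have hR_card : (#{p ∈ P | p ∈ R} : ℝ) * ε ^ 2 ≤ 2 * (volume R).toReal :=
    card_filter_mem_mul_sq_le hε (fun p hp q hq hne => hsep p hp q hq hne) hR hvol
  have hP_card : C ≤ ε ^ 2 * #P := by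
    rwa [inv_pow, ← div_eq_mul_inv, div_le_iff₀ (by positivity), mul_comm] at hcard
  rw [inv_card_smul_sum_dirac_apply P hR.measurableSet]
  refine ENNReal.div_le_of_le_mul (ENNReal.div_le_of_le_mul ?_)
  rw [← ENNReal.ofReal_toReal hR.volume_ne_top, ← ENNReal.ofReal_natCast,
    ← ENNReal.ofReal_natCast, ← ENNReal.ofReal_mul (by positivity),
    ← ENNReal.ofReal_mul (by positivity)]
  refine ENNReal.ofReal_le_ofReal ?_
  rw [div_mul_eq_mul_div, div_mul_eq_mul_div, le_div_iff₀ hC]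
  calc (#{p ∈ P | p ∈ R} : ℝ) * C ≤ #{p ∈ P | p ∈ R} * ε ^ 2 * #P := by
        rw [mul_assoc]; gcongr
    _ ≤ 2 * (volume R).toReal * #P := by gcongr

/-- If `P ⊆ [0,1)²` is `ε`-separated with `#P ≥ C·ε^{-2}` and `μ` is the uniform
probability measure on `P`, then `⟨μ⟩_R ≤ 2/C` for every dyadic rectangle `R` with
`|R| ≥ ε²`. -/
theorem stmt6 (ε C : ℝ) (hε : 0 < ε) (hC : 0 < C)
    (P : Finset (ℝ × ℝ)) (hPsub : (↑P : Set (ℝ × ℝ)) ⊆ unitSq)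
    (hsep : ∀ p ∈ P, ∀ q ∈ P, p ≠ q → ENNReal.ofReal ε ≤ distH p q)
    (hcard : C * ε⁻¹ ^ 2 ≤ (P.card : ℝ)) :
    ∀ R : Set (ℝ × ℝ), IsDyadicRect R → ENNReal.ofReal (ε ^ 2) ≤ volume R →
      (((P.card : ℝ≥0∞))⁻¹ • ∑ p ∈ P, Measure.dirac p) R / volume R ≤
        ENNReal.ofReal (2 / C) :=
  stmt6_general ε C hε hC P hsep hcard
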